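/- Consider the action of Z on the set ⊔_{m≥1} (Z/4Z)^m-towers where the generator acts on the m-th level by the following rule: the generator acts on Z/4Z by the 4-cycle (0 1 2 3), and a power σ^k acts such that the induced 'lifted exponents' halve: the lifts of σ^k are σ^{k/2} (all four) if k is even, and two copies each of σ^{⌊k/2⌋} and σ^{⌈k/2⌉} if k is odd. Then for any nonzero k ∈ Z, writing k = 2^m q with q odd, the induced permutation on the m-th level (i.e., on (Z/4Z)^m compatible sequences, equivalently on 4^m points) is nontrivial. Consequently the resulting action of Z ≅ B_2 on the inverse limit is faithful. -/
import Mathlib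


/-- The exponent rule for lifts: `σ^k` lifts to `σ^{k/2}` at every child if `k` is even,
and to `σ^{⌈k/2⌉}` at the children `1, 3` and `σ^{⌊k/2⌋}` at the children `0, 2`
if `k` is odd. -/
def liftExp (k : ℤ) (i : ZMod 4) : ℤ :=
  if Even k then k / 2
  else if i = 1 ∨ i = 3 then (k + 1) / 2 else (k - 1) / 2

/-- The self-similar action of `ℤ ≅ B₂` on the levels of the 4-adic tower: the generator
acts on `ℤ/4ℤ` by the 4-cycle `(0 1 2 3)` (i.e. `+1`), and the action on deeper levels is
given by the lifted exponents. -/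
def act : (m : ℕ) → ℤ → (Fin m → ZMod 4) → (Fin m → ZMod 4)
  | 0, _, x => x
  | m + 1, k, x =>
      Fin.cons (x 0 + (k : ZMod 4)) (act m (liftExp k (x 0)) (fun i => x i.succ))

lemma odd_ne_zero_zmod4 {q : ℤ} (hq : Odd q) : (q : ZMod 4) ≠ 0 := by
  intro h
  have : (4 : ℤ) ∣ q := by
    have := (ZMod.intCast_zmod_eq_zero_iff_dvd q 4).mp h
    exact_mod_cast this
  rcases hq with ⟨r, hr⟩
  omega

lemma key (m : ℕ) (q : ℤ) (hq : Odd q) :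
    act (m + 1) (2 ^ m * q) (fun _ => 0) ≠ (fun _ => 0) := by
  induction m with
  | zero =>
    intro h
    have := congrFun h 0
    simp [act, Fin.cons] at this
    exact odd_ne_zero_zmod4 hq this
  | succ m ih =>
    intro h
    apply ih
    funext i
    have h1 := congrFun h i.succ
    have he : Even (2 ^ (m + 1) * q) := ⟨2 ^ m * q, by ring⟩
    have hl : liftExp (2 ^ (m + 1) * q) 0 = 2 ^ m * q := by
      simp only [liftExp, if_pos he]
      rw [pow_succ, mul_comm (2 ^ m) 2, mul_assoc]
      exact Int.mul_ediv_cancel_left _ (by norm_num)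
    simpa [act, hl, Fin.cons_succ] using h1

/-- For any nonzero `k = 2^m q` with `q` odd, the induced permutation on the `(m+1)`-st
level of the tower is nontrivial; consequently the action of `ℤ ≅ B₂` on the inverse
limit is faithful. -/
theorem stmt10 :
    (∀ (m : ℕ) (q : ℤ), Odd q →
        ∃ x : Fin (m + 1) → ZMod 4, act (m + 1) (2 ^ m * q) x ≠ x) ∧
    (∀ k : ℤ, k ≠ 0 → ∃ (m : ℕ) (x : Fin m → ZMod 4), act m k x ≠ x) := by
  constructor
  · exact fun m q hq => ⟨fun _ => 0, key m q hq⟩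
  · intro k hk
    obtain ⟨m, q, hq, rfl⟩ : ∃ (m : ℕ) (q : ℤ), Odd q ∧ k = 2 ^ m * q := by
      obtain ⟨m, n, hn, h⟩ := Nat.exists_eq_pow_mul_and_not_dvd
        (Int.natAbs_ne_zero.mpr hk) 2 (by norm_num)
      rcases Int.natAbs_eq k with hk' | hk'
      · exact ⟨m, n, Int.odd_iff.mpr (by omega), by rw [hk', h]; push_cast; ring⟩
      · exact ⟨m, -n, Int.odd_iff.mpr (by omega),
          by rw [hk', h]; push_cast; ring⟩
    exact ⟨m + 1, fun _ => 0, key m q hq⟩
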